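/- Let s > 0 and a > 1 be real, let B ≥ 1 be an integer, and let T_1, …, T_B be independent, identically distributed real random variables, each with the Pareto distribution Pareto(s, a). Then E[max(T_1, …, T_B)] = s · Γ(B+1) · Γ(1 − 1/a) / Γ(B + 1 − 1/a), where Γ is the Gamma function. In particular, with s = Nσ/B and a = Nα/B (where B divides N and Nα > B), the average job compute time with B balanced non-overlapping batches and Pareto(σ, α) task service times equals (Nσ/B) · Γ(B+1) · Γ(1 − B/(Nα)) / Γ(B + 1 − B/(Nα)). -/

import Mathlib

/-!
By the layer-cake formula and independence, `E[max T] = ∫₀^∞ (1 - F(t)^B) dt` with `F` the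
Pareto CDF. The integrand is `1` on `(0, s]`; on `(s, ∞)` the substitution `u = (t / s)^(-a)`
turns it into `(s / a) ∫₀¹ u^(-1/a - 1) (1 - (1 - u)^B) du`. Expanding
`1 - (1 - u)^B = u ∑_{k<B} (1 - u)^k` gives a sum of Beta integrals `B(1 - 1/a, k + 1)`, which
telescopes by `Γ(z + 1) = z Γ(z)`.
-/

open MeasureTheory ProbabilityTheory Finset

section Probability

variable {Ω : Type*} [MeasurableSpace Ω] {μ : Measure Ω}

lemma integral_eq_integral_Ioi_of_measure_lt {X : Ω → ℝ} (hX0 : 0 ≤ᵐ[μ] X)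
    (hX : AEMeasurable X μ) {g : ℝ → ℝ} (hg0 : ∀ t ∈ Set.Ioi 0, 0 ≤ g t)
    (hg : IntegrableOn g (Set.Ioi 0))
    (htail : ∀ t ∈ Set.Ioi 0, μ {ω | t < X ω} = ENNReal.ofReal (g t)) :
    ∫ ω, X ω ∂μ = ∫ t in Set.Ioi 0, g t := by
  rw [integral_eq_lintegral_of_nonneg_ae hX0 hX.aestronglyMeasurable,
    lintegral_eq_lintegral_meas_lt μ hX0 hX, setLIntegral_congr_fun measurableSet_Ioi htail,
    ← ofReal_integral_eq_lintegral_ofReal hg (ae_restrict_of_forall_mem measurableSet_Ioi hg0),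
    ENNReal.toReal_ofReal (setIntegral_nonneg measurableSet_Ioi hg0)]

lemma integral_eq_integral_Ioi_one_sub_cdf [IsProbabilityMeasure μ] {X : Ω → ℝ}
    (hX : Measurable X) (hX0 : 0 ≤ᵐ[μ] X) {F : ℝ → ℝ}
    (hF : ∀ t, μ {ω | X ω ≤ t} = ENNReal.ofReal (F t)) (hF0 : ∀ t, 0 ≤ F t)
    (hint : IntegrableOn (fun t => 1 - F t) (Set.Ioi 0)) :
    ∫ ω, X ω ∂μ = ∫ t in Set.Ioi 0, 1 - F t := by
  have hF1 : ∀ t, F t ≤ 1 := fun t =>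
    ENNReal.ofReal_le_one.1 (hF t ▸ prob_le_one)
  refine integral_eq_integral_Ioi_of_measure_lt hX0 hX.aemeasurable
    (fun t _ => sub_nonneg.2 (hF1 t)) hint fun t _ => ?_
  have hcompl : {ω | t < X ω} = {ω | X ω ≤ t}ᶜ := by ext; simp
  rw [hcompl, prob_compl_eq_one_sub (measurableSet_le hX measurable_const), hF,
    ENNReal.ofReal_sub _ (hF0 t), ENNReal.ofReal_one]

lemma ProbabilityTheory.iIndepFun.measure_sup'_le {ι β : Type*} [Fintype ι] [LinearOrder β]
    [TopologicalSpace β] [OrderClosedTopology β] [MeasurableSpace β] [OpensMeasurableSpace β]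
    {T : ι → Ω → β} (hT : iIndepFun T μ) (hne : (univ : Finset ι).Nonempty) (t : β) :
    μ {ω | univ.sup' hne (fun i => T i ω) ≤ t} = ∏ i, μ {ω | T i ω ≤ t} := by
  have hset :
      {ω | univ.sup' hne (fun i => T i ω) ≤ t} = ⋂ i ∈ univ, T i ⁻¹' Set.Iic t := by
    ext ω
    simp [Finset.sup'_le_iff]
  rw [hset, hT.measure_inter_preimage_eq_mul univ fun _ _ => measurableSet_Iic]
  rfl

end Probability

namespace ProbabilityTheory

lemma lintegral_Ioo_rpow_mul_one_sub_rpow {α β : ℝ} (hα : 0 < α) (hβ : 0 < β) :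
    ∫⁻ x in Set.Ioo (0 : ℝ) 1, ENNReal.ofReal (x ^ (α - 1) * (1 - x) ^ (β - 1)) =
      ENNReal.ofReal (beta α β) := by
  have hb := beta_pos hα hβ
  have h := lintegral_betaPDF_eq_one hα hβ
  simp_rw [lintegral_betaPDF, mul_assoc, ENNReal.ofReal_mul (one_div_pos.2 hb).le,
    lintegral_const_mul' _ _ ENNReal.ofReal_ne_top] at h
  rw [← ENNReal.eq_div_iff (by simpa using hb) ENNReal.ofReal_ne_top, ← ENNReal.ofReal_one,
    ← ENNReal.ofReal_div_of_pos (one_div_pos.2 hb)] at h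
  rw [h]
  congr 1
  field_simp

lemma rpow_mul_one_sub_rpow_nonneg {α β x : ℝ} (hx : x ∈ Set.Ioo 0 1) :
    0 ≤ x ^ (α - 1) * (1 - x) ^ (β - 1) :=
  mul_nonneg (Real.rpow_nonneg hx.1.le _) (Real.rpow_nonneg (by linarith [hx.2]) _)

lemma integrableOn_Ioo_rpow_mul_one_sub_rpow {α β : ℝ} (hα : 0 < α) (hβ : 0 < β) :
    IntegrableOn (fun x => x ^ (α - 1) * (1 - x) ^ (β - 1)) (Set.Ioo (0 : ℝ) 1) := by
  refine ⟨by fun_prop, ?_⟩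
  rw [hasFiniteIntegral_iff_ofReal (ae_restrict_of_forall_mem measurableSet_Ioo
    fun x hx => rpow_mul_one_sub_rpow_nonneg hx), lintegral_Ioo_rpow_mul_one_sub_rpow hα hβ]
  exact ENNReal.ofReal_lt_top

lemma integral_Ioo_rpow_mul_one_sub_rpow {α β : ℝ} (hα : 0 < α) (hβ : 0 < β) :
    ∫ x in Set.Ioo (0 : ℝ) 1, x ^ (α - 1) * (1 - x) ^ (β - 1) = beta α β := by
  rw [integral_eq_lintegral_of_nonneg_ae (ae_restrict_of_forall_mem measurableSet_Ioo
    fun x hx => rpow_mul_one_sub_rpow_nonneg hx) (by fun_prop),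
    lintegral_Ioo_rpow_mul_one_sub_rpow hα hβ, ENNReal.toReal_ofReal (beta_pos hα hβ).le]

end ProbabilityTheory

section ParetoSubstitution

variable {s a : ℝ}

lemma strictAntiOn_div_rpow_neg (hs : 0 < s) (ha : 0 < a) :
    StrictAntiOn (fun t : ℝ => (t / s) ^ (-a)) (Set.Ioi 0) := fun _ ht _ _ hlt =>
  Real.strictAntiOn_rpow_Ioi_of_exponent_neg (neg_neg_of_pos ha) (div_pos ht hs)
    (div_pos (lt_trans ht hlt) hs) (div_lt_div_of_pos_right hlt hs)

lemma image_Ioi_div_rpow_neg (hs : 0 < s) (ha : 0 < a) :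
    (fun t : ℝ => (t / s) ^ (-a)) '' Set.Ioi s = Set.Ioo 0 1 := by
  ext u
  constructor
  · rintro ⟨t, ht, rfl⟩
    have hts : 1 < t / s := (one_lt_div hs).2 ht
    exact ⟨Real.rpow_pos_of_pos (by linarith) _,
      Real.rpow_lt_one_of_one_lt_of_neg hts (neg_neg_of_pos ha)⟩
  · rintro ⟨hu0, hu1⟩
    refine ⟨s * u ^ (-a)⁻¹, ?_, ?_⟩
    · exact lt_mul_of_one_lt_right hs
        (Real.one_lt_rpow_of_pos_of_lt_one_of_neg hu0 hu1 (by simpa using ha))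
    · simp only [mul_div_cancel_left₀ _ hs.ne']
      exact Real.rpow_inv_rpow hu0.le (by linarith)

lemma hasDerivAt_div_rpow_neg (hs : 0 < s) {t : ℝ} (ht : 0 < t) :
    HasDerivAt (fun t : ℝ => (t / s) ^ (-a)) (-(a / s) * (t / s) ^ (-a - 1)) t := by
  refine ((Real.hasDerivAt_rpow_const (p := -a) (Or.inl (div_pos ht hs).ne')).comp t
    ((hasDerivAt_id t).div_const s)).congr_deriv ?_
  ring

lemma abs_deriv_mul_rpow_div_rpow_neg (hs : 0 < s) (ha : 0 < a) {t : ℝ} (ht : 0 < t) :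
    |-(a / s) * (t / s) ^ (-a - 1)| * ((t / s) ^ (-a)) ^ (-1 / a - 1) = a / s := by
  have hts : 0 < t / s := div_pos ht hs
  rw [abs_mul, abs_neg, abs_of_pos (div_pos ha hs), abs_of_pos (Real.rpow_pos_of_pos hts _),
    ← Real.rpow_mul hts.le, mul_assoc, ← Real.rpow_add hts]
  convert mul_one (a / s) using 2
  convert Real.rpow_zero (t / s) using 2
  field_simp
  ring

lemma hasDerivWithinAt_div_rpow_neg (hs : 0 < s) :
    ∀ t ∈ Set.Ioi s, HasDerivWithinAt (fun t : ℝ => (t / s) ^ (-a))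
      (-(a / s) * (t / s) ^ (-a - 1)) (Set.Ioi s) t := fun _ ht =>
  (hasDerivAt_div_rpow_neg hs (lt_trans hs ht)).hasDerivWithinAt

lemma injOn_Ioi_div_rpow_neg (hs : 0 < s) (ha : 0 < a) :
    Set.InjOn (fun t : ℝ => (t / s) ^ (-a)) (Set.Ioi s) :=
  ((strictAntiOn_div_rpow_neg hs ha).mono fun _ ht => lt_trans hs ht).injOn

variable {E : Type*} [NormedAddCommGroup E] [NormedSpace ℝ E]

lemma eqOn_abs_deriv_smul_div_rpow_neg (hs : 0 < s) (ha : 0 < a) (g : ℝ → E) :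
    Set.EqOn (fun t => |-(a / s) * (t / s) ^ (-a - 1)| •
        (((t / s) ^ (-a)) ^ (-1 / a - 1) • g ((t / s) ^ (-a))))
      (fun t => (a / s) • g ((t / s) ^ (-a))) (Set.Ioi s) := fun _ ht => by
  simp only [smul_smul, abs_deriv_mul_rpow_div_rpow_neg hs ha (lt_trans hs ht)]

lemma integrableOn_Ioi_comp_div_rpow_neg_iff (hs : 0 < s) (ha : 0 < a) (g : ℝ → E) :
    IntegrableOn (fun t => g ((t / s) ^ (-a))) (Set.Ioi s) ↔
      IntegrableOn (fun u => u ^ (-1 / a - 1) • g u) (Set.Ioo 0 1) := by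
  rw [← image_Ioi_div_rpow_neg hs ha, integrableOn_image_iff_integrableOn_abs_deriv_smul
      measurableSet_Ioi (hasDerivWithinAt_div_rpow_neg hs) (injOn_Ioi_div_rpow_neg hs ha),
    integrableOn_congr_fun (eqOn_abs_deriv_smul_div_rpow_neg hs ha g) measurableSet_Ioi]
  exact (integrable_smul_iff (div_pos ha hs).ne' _).symm

lemma integral_Ioi_comp_div_rpow_neg (hs : 0 < s) (ha : 0 < a) (g : ℝ → E) :
    ∫ t in Set.Ioi s, g ((t / s) ^ (-a)) =
      (s / a) • ∫ u in Set.Ioo 0 1, u ^ (-1 / a - 1) • g u := by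
  rw [← image_Ioi_div_rpow_neg hs ha, integral_image_eq_integral_abs_deriv_smul
      measurableSet_Ioi (hasDerivWithinAt_div_rpow_neg hs) (injOn_Ioi_div_rpow_neg hs ha),
    setIntegral_congr_fun measurableSet_Ioi (eqOn_abs_deriv_smul_div_rpow_neg hs ha g),
    integral_smul, smul_smul, div_mul_div_comm, mul_comm s a, div_self (by positivity), one_smul]

end ParetoSubstitution

lemma one_sub_mul_sum_range_beta {x : ℝ} (hx : 0 < x) (n : ℕ) :
    (1 - x) * ∑ k ∈ range n, beta x (k + 1) =
      Real.Gamma (n + 1) * Real.Gamma x / Real.Gamma (n + x) - 1 := by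
  have hΓx := (Real.Gamma_pos_of_pos hx).ne'
  induction n with
  | zero => simp [Real.Gamma_one, hΓx]
  | succ n ih =>
    have hnx : 0 < (n : ℝ) + x := by positivity
    rw [sum_range_succ, mul_add, ih, beta, Nat.cast_succ, show x + (n + 1) = n + x + 1 by ring,
      show (n : ℝ) + 1 + x = n + x + 1 by ring, Real.Gamma_add_one hnx.ne',
      Real.Gamma_add_one (s := n + 1) (by positivity)]
    field_simp
    ring

lemma rpow_mul_one_sub_one_sub_pow_eq_sum {a u : ℝ} (hu : 0 < u) (n : ℕ) :
    u ^ (-1 / a - 1) * (1 - (1 - u) ^ n) =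
      ∑ k ∈ range n, u ^ ((1 - 1 / a) - 1) * (1 - u) ^ (((k + 1 : ℕ) : ℝ) - 1) := by
  have hgeom : 1 - (1 - u) ^ n = u * ∑ k ∈ range n, (1 - u) ^ k := by
    linear_combination (geom_sum_mul (1 - u) n)
  have hpow : u ^ (-1 / a - 1) * u = u ^ ((1 - 1 / a) - 1) := by
    rw [← Real.rpow_add_one hu.ne']; ring_nf
  simp only [hgeom, ← mul_assoc, hpow, mul_sum, Nat.cast_succ, add_sub_cancel_right,
    Real.rpow_natCast]

noncomputable def paretoCDF (s a t : ℝ) : ℝ := if t < s then 0 else 1 - (t / s) ^ (-a)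

section ParetoCDF

variable {s a t : ℝ}

lemma paretoCDF_of_le (hs : 0 < s) (ht : t ≤ s) : paretoCDF s a t = 0 := by
  rcases ht.lt_or_eq with ht | rfl
  · exact if_pos ht
  · simp [paretoCDF, div_self hs.ne']

lemma paretoCDF_of_ge (ht : s ≤ t) : paretoCDF s a t = 1 - (t / s) ^ (-a) :=
  if_neg ht.not_gt

lemma paretoCDF_nonneg (hs : 0 < s) (ha : 0 ≤ a) : 0 ≤ paretoCDF s a t := by
  rcases le_total t s with ht | ht
  · rw [paretoCDF_of_le hs ht]
  · rw [paretoCDF_of_ge ht, sub_nonneg]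
    exact Real.rpow_le_one_of_one_le_of_nonpos ((one_le_div hs).2 ht) (neg_nonpos.2 ha)

end ParetoCDF

lemma integral_Ioi_one_sub_one_sub_div_rpow_neg_pow {s a : ℝ} (hs : 0 < s) (ha : 1 < a)
    (n : ℕ) :
    IntegrableOn (fun t => 1 - (1 - (t / s) ^ (-a)) ^ n) (Set.Ioi s) ∧
      ∫ t in Set.Ioi s, 1 - (1 - (t / s) ^ (-a)) ^ n =
        s * (Real.Gamma (n + 1) * Real.Gamma (1 - 1 / a) / Real.Gamma (n + 1 - 1 / a) - 1) := by
  have ha0 : 0 < a := by linarith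
  have hx : 0 < 1 - 1 / a := by rw [sub_pos, div_lt_one ha0]; exact ha
  have hsum := fun u (hu : u ∈ Set.Ioo (0 : ℝ) 1) =>
    rpow_mul_one_sub_one_sub_pow_eq_sum (a := a) hu.1 n
  have hterm : ∀ k ∈ range n, IntegrableOn
      (fun u : ℝ => u ^ ((1 - 1 / a) - 1) * (1 - u) ^ (((k + 1 : ℕ) : ℝ) - 1))
      (Set.Ioo 0 1) :=
    fun k _ => integrableOn_Ioo_rpow_mul_one_sub_rpow hx (by positivity)
  constructor
  · refine (integrableOn_Ioi_comp_div_rpow_neg_iff hs ha0 (fun u => 1 - (1 - u) ^ n)).2 ?_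
    exact IntegrableOn.congr_fun (integrable_finsetSum _ hterm) (fun u hu => (hsum u hu).symm)
      measurableSet_Ioo
  · rw [integral_Ioi_comp_div_rpow_neg hs ha0 (fun u => 1 - (1 - u) ^ n)]
    simp only [smul_eq_mul]
    rw [setIntegral_congr_fun measurableSet_Ioo hsum, integral_finsetSum _ hterm,
      sum_congr rfl fun k _ => integral_Ioo_rpow_mul_one_sub_rpow hx (by positivity),
      show (n : ℝ) + 1 - 1 / a = n + (1 - 1 / a) by ring, ← one_sub_mul_sum_range_beta hx]
    push_cast
    ring

lemma integral_Ioi_one_sub_paretoCDF_pow {s a : ℝ} (hs : 0 < s) (ha : 1 < a) {n : ℕ}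
    (hn : n ≠ 0) :
    IntegrableOn (fun t => 1 - paretoCDF s a t ^ n) (Set.Ioi 0) ∧
      ∫ t in Set.Ioi 0, 1 - paretoCDF s a t ^ n =
        s * Real.Gamma (n + 1) * Real.Gamma (1 - 1 / a) / Real.Gamma (n + 1 - 1 / a) := by
  obtain ⟨hint, hval⟩ := integral_Ioi_one_sub_one_sub_div_rpow_neg_pow hs ha n
  have hIoc : Set.EqOn (fun t => 1 - paretoCDF s a t ^ n) 1 (Set.Ioc 0 s) := fun t ht => by
    simp [paretoCDF_of_le hs ht.2, hn]
  have hIoi : Set.EqOn (fun t => 1 - paretoCDF s a t ^ n)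
      (fun t => 1 - (1 - (t / s) ^ (-a)) ^ n) (Set.Ioi s) := fun t ht => by
    simp only [paretoCDF_of_ge (le_of_lt ht)]
  have hintIoc : IntegrableOn (fun t => 1 - paretoCDF s a t ^ n) (Set.Ioc 0 s) :=
    (integrableOn_const measure_Ioc_lt_top.ne).congr_fun hIoc.symm measurableSet_Ioc
  have hintIoi : IntegrableOn (fun t => 1 - paretoCDF s a t ^ n) (Set.Ioi s) :=
    hint.congr_fun hIoi.symm measurableSet_Ioi
  rw [← Set.Ioc_union_Ioi_eq_Ioi hs.le]
  refine ⟨hintIoc.union hintIoi, ?_⟩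
  rw [setIntegral_union (Set.Ioc_disjoint_Ioi le_rfl) measurableSet_Ioi hintIoc hintIoi,
    setIntegral_congr_fun measurableSet_Ioc hIoc, setIntegral_congr_fun measurableSet_Ioi hIoi,
    hval]
  simp [hs.le]
  ring

/-- If `T 0, …, T (B-1)` are i.i.d. Pareto(s, a) random variables with scale `s > 0` and shape
`a > 1` (CDF `F(t) = 0` for `t < s` and `F(t) = 1 - (t/s)^{-a}` for `t ≥ s`), then
`E[max_i T i] = s · Γ(B+1) · Γ(1 − 1/a) / Γ(B + 1 − 1/a)`. -/
theorem expected_max_pareto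
    {Ω : Type*} [MeasureSpace Ω] [IsProbabilityMeasure (ℙ : Measure Ω)]
    (s a : ℝ) (hs : 0 < s) (ha : 1 < a) (B : ℕ) (hB : 1 ≤ B)
    (T : Fin B → Ω → ℝ) (hmeas : ∀ i, Measurable (T i))
    (hindep : iIndepFun T ℙ)
    (hcdf : ∀ i t, ℙ {ω | T i ω ≤ t} =
      ENNReal.ofReal (if t < s then 0 else 1 - (t / s) ^ (-a))) :
    (∫ ω, Finset.univ.sup' ⟨⟨0, hB⟩, Finset.mem_univ _⟩ fun i => T i ω)
      = s * Real.Gamma ((B : ℝ) + 1) * Real.Gamma (1 - 1 / a)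
          / Real.Gamma ((B : ℝ) + 1 - 1 / a) := by
  let M : Ω → ℝ := fun ω => univ.sup' ⟨⟨0, hB⟩, mem_univ _⟩ fun i => T i ω
  have hM : Measurable M := by fun_prop
  have hcdfM : ∀ t, ℙ {ω | M ω ≤ t} = ENNReal.ofReal (paretoCDF s a t ^ B) := fun t => by
    refine (hindep.measure_sup'_le _ t).trans ?_
    rw [prod_congr rfl fun i _ => hcdf i t, prod_const, card_univ, Fintype.card_fin]
    exact (ENNReal.ofReal_pow (paretoCDF_nonneg hs (by linarith)) B).symm
  have hM0 : 0 ≤ᵐ[ℙ] M := by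
    refine ae_iff.2 (measure_mono_null (t := {ω | M ω ≤ 0})
      (fun ω hω => le_of_lt (not_le.1 hω)) ?_)
    rw [hcdfM, paretoCDF_of_le hs hs.le, zero_pow (by omega), ENNReal.ofReal_zero]
  obtain ⟨hint, hval⟩ := integral_Ioi_one_sub_paretoCDF_pow hs ha (n := B) (by omega)
  rw [integral_eq_integral_Ioi_one_sub_cdf hM hM0 hcdfM
    (fun t => pow_nonneg (paretoCDF_nonneg hs (by linarith)) B) hint, hval]
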